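/- Completeness of the forking diagrams for (top) in Simple: for all Simple expressions e, e1, e2, if e →sr e1 and e →top e2, then e1 = e2, or e2 →sr e1, or there exists e' such that e1 →top e' and e2 →sr e'. -/

import Mathlib

/-- Expressions of the calculus `Simple`: `e ::= ⊥ | ⊤ | ¬e | e ∧ e`. -/
inductive SExp : Type where
  | bot : SExp
  | top : SExp
  | neg : SExp → SExp
  | and : SExp → SExp → SExp

/-- Evaluation contexts: `A ::= [·] | ¬A | A ∧ e`. -/
inductive ECtx : Type where
  | hole : ECtx
  | neg : ECtx → ECtx
  | and : ECtx → SExp → ECtx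

/-- Hole filling for evaluation contexts. -/
def ECtx.fill : ECtx → SExp → SExp
  | .hole, e => e
  | .neg A, e => .neg (A.fill e)
  | .and A t, e => .and (A.fill e) t

/-- General contexts: `C ::= [·] | ¬C | C ∧ e | e ∧ C`. -/
inductive GCtx : Type where
  | hole : GCtx
  | neg : GCtx → GCtx
  | andL : GCtx → SExp → GCtx
  | andR : SExp → GCtx → GCtx

/-- Hole filling for general contexts. -/
def GCtx.fill : GCtx → SExp → SExp
  | .hole, e => e
  | .neg C, e => .neg (C.fill e)
  | .andL C t, e => .and (C.fill e) t
  | .andR t C, e => .and t (C.fill e)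

/-- Labels of the standard-reduction rules. -/
inductive SRLab : Type where
  | bot | top | neg1 | neg2

/-- The labelled standard reduction rules of `Simple`. -/
inductive SRL : SRLab → SExp → SExp → Prop where
  | bot (A : ECtx) (e : SExp) : SRL .bot (A.fill (.and .bot e)) (A.fill .bot)
  | top (A : ECtx) (e : SExp) : SRL .top (A.fill (.and .top e)) (A.fill e)
  | neg1 (A : ECtx) : SRL .neg1 (A.fill (.neg .top)) (A.fill .bot)
  | neg2 (A : ECtx) : SRL .neg2 (A.fill (.neg .bot)) (A.fill .top)

/-- The standard reduction `→sr` (union of the four rules). -/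
def SR (e e' : SExp) : Prop := ∃ a, SRL a e e'

/-- The transformation `(top)`: `C[⊤ ∧ e] →top C[e]` for all general contexts `C`. -/
inductive TopT : SExp → SExp → Prop where
  | mk (C : GCtx) (e : SExp) : TopT (C.fill (.and .top e)) (C.fill e)

/-- Convergence: `e ↓` iff `e →sr* ⊤`. -/
def SConv (e : SExp) : Prop := Relation.ReflTransGen SR e .top

/-!
A standard-reduction step contracts the unique redex in evaluation position, while `(top)` may
act anywhere. Induct on the context `C` of the `(top)` step. When the `(top)`-redex lies inside
the evaluation position, the diagram for the subterm is lifted through `¬·` or `· ∧ s`; when it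
is the redex itself, both steps coincide. Otherwise the `(top)`-redex sits to the right of a
conjunction `s ∧ C[⊤ ∧ t]`, where the standard step touches only `s` and so commutes with it,
except that `⊥ ∧ ·` erases the `(top)`-redex and `⊤ ∧ ·` exposes it.
-/

inductive Redex : SExp → SExp → Prop where
  | bot (e : SExp) : Redex (.and .bot e) .bot
  | top (e : SExp) : Redex (.and .top e) e
  | neg1 : Redex (.neg .top) .bot
  | neg2 : Redex (.neg .bot) .top

theorem sr_iff_exists_redex {e e' : SExp} :
    SR e e' ↔ ∃ (A : ECtx) (r r' : SExp), Redex r r' ∧ e = A.fill r ∧ e' = A.fill r' := by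
  constructor
  · rintro ⟨_, h⟩
    cases h with
    | bot A e => exact ⟨A, _, _, .bot e, rfl, rfl⟩
    | top A e => exact ⟨A, _, _, .top e, rfl, rfl⟩
    | neg1 A => exact ⟨A, _, _, .neg1, rfl, rfl⟩
    | neg2 A => exact ⟨A, _, _, .neg2, rfl, rfl⟩
  · rintro ⟨A, r, r', hr, rfl, rfl⟩
    cases hr
    exacts [⟨_, .bot A _⟩, ⟨_, .top A _⟩, ⟨_, .neg1 A⟩, ⟨_, .neg2 A⟩]

namespace SR

variable {x y t : SExp}

theorem neg (h : SR x y) : SR (.neg x) (.neg y) := by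
  obtain ⟨A, r, r', hr, rfl, rfl⟩ := sr_iff_exists_redex.1 h
  exact sr_iff_exists_redex.2 ⟨.neg A, r, r', hr, rfl, rfl⟩

theorem andL (t : SExp) (h : SR x y) : SR (.and x t) (.and y t) := by
  obtain ⟨A, r, r', hr, rfl, rfl⟩ := sr_iff_exists_redex.1 h
  exact sr_iff_exists_redex.2 ⟨.and A t, r, r', hr, rfl, rfl⟩

theorem not_top : ¬ SR .top y := by
  intro h
  obtain ⟨A, r, r', hr, he, -⟩ := sr_iff_exists_redex.1 h
  cases A <;> cases hr <;> cases he

theorem neg_inv (h : SR (.neg x) y) :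
    (x = .top ∧ y = .bot) ∨ (x = .bot ∧ y = .top) ∨ ∃ x', SR x x' ∧ y = .neg x' := by
  obtain ⟨A, r, r', hr, he, rfl⟩ := sr_iff_exists_redex.1 h
  cases A with
  | hole => cases hr <;> simp_all [ECtx.fill]
  | neg A =>
    cases he
    exact Or.inr (Or.inr ⟨_, sr_iff_exists_redex.2 ⟨A, r, r', hr, rfl, rfl⟩, rfl⟩)
  | and A s => cases he

theorem and_inv (h : SR (.and x t) y) :
    (x = .bot ∧ y = .bot) ∨ (x = .top ∧ y = t) ∨ ∃ x', SR x x' ∧ y = .and x' t := by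
  obtain ⟨A, r, r', hr, he, rfl⟩ := sr_iff_exists_redex.1 h
  cases A with
  | hole => cases hr <;> simp_all [ECtx.fill]
  | neg A => cases he
  | and A s =>
    cases he
    exact Or.inr (Or.inr ⟨_, sr_iff_exists_redex.2 ⟨A, r, r', hr, rfl, rfl⟩, rfl⟩)

end SR

namespace TopT

variable {x y : SExp}

theorem neg (h : TopT x y) : TopT (.neg x) (.neg y) := by
  obtain ⟨C, e⟩ := h
  exact .mk (.neg C) e

theorem andL (t : SExp) (h : TopT x y) : TopT (.and x t) (.and y t) := by
  obtain ⟨C, e⟩ := h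
  exact .mk (.andL C t) e

end TopT

theorem GCtx.fill_and_ne_top (C : GCtx) (s t : SExp) : C.fill (.and s t) ≠ .top := by
  cases C <;> simp [GCtx.fill]

theorem GCtx.fill_and_ne_bot (C : GCtx) (s t : SExp) : C.fill (.and s t) ≠ .bot := by
  cases C <;> simp [GCtx.fill]

/-- The forking diagram for a standard step `e →sr e1` and a `(top)` step `e →top e2`
can be completed. -/
def ForkCloses (e1 e2 : SExp) : Prop :=
  e1 = e2 ∨ SR e2 e1 ∨ ∃ e', TopT e1 e' ∧ SR e2 e'

namespace ForkCloses

variable {e1 e2 : SExp}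

theorem neg : ForkCloses e1 e2 → ForkCloses (.neg e1) (.neg e2) := by
  rintro (rfl | h | ⟨e', h1, h2⟩)
  exacts [Or.inl rfl, Or.inr (Or.inl h.neg), Or.inr (Or.inr ⟨_, h1.neg, h2.neg⟩)]

theorem andL (t : SExp) : ForkCloses e1 e2 → ForkCloses (.and e1 t) (.and e2 t) := by
  rintro (rfl | h | ⟨e', h1, h2⟩)
  exacts [Or.inl rfl, Or.inr (Or.inl (h.andL t)), Or.inr (Or.inr ⟨_, h1.andL t, h2.andL t⟩)]

end ForkCloses

theorem forkCloses_of_sr_fill_top_and (C : GCtx) (t : SExp) {e1 : SExp}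
    (h : SR (C.fill (.and .top t)) e1) : ForkCloses e1 (C.fill t) := by
  induction C generalizing e1 with
  | hole =>
    obtain ⟨h, -⟩ | ⟨-, rfl⟩ | ⟨x', hx', -⟩ := h.and_inv
    · cases h
    · exact Or.inl rfl
    · exact absurd hx' SR.not_top
  | neg C ih =>
    obtain ⟨h, -⟩ | ⟨h, -⟩ | ⟨x', hx', rfl⟩ := h.neg_inv
    · exact absurd h (C.fill_and_ne_top _ _)
    · exact absurd h (C.fill_and_ne_bot _ _)
    · exact (ih hx').neg
  | andL C s ih =>
    obtain ⟨h, -⟩ | ⟨h, -⟩ | ⟨x', hx', rfl⟩ := h.and_inv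
    · exact absurd h (C.fill_and_ne_bot _ _)
    · exact absurd h (C.fill_and_ne_top _ _)
    · exact (ih hx').andL s
  | andR s C =>
    obtain ⟨rfl, rfl⟩ | ⟨rfl, rfl⟩ | ⟨s', hs', rfl⟩ := h.and_inv
    · exact Or.inr (Or.inl ⟨_, .bot .hole _⟩)
    · exact Or.inr (Or.inr ⟨_, .mk C t, ⟨_, .top .hole _⟩⟩)
    · exact Or.inr (Or.inr ⟨_, .mk (.andR s' C) t, hs'.andL _⟩)

/-- completeness of the forking diagrams for `(top)` in `Simple`. -/
theorem simple_top_forking_diagrams :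
    ∀ e e1 e2 : SExp, SR e e1 → TopT e e2 →
      e1 = e2 ∨ SR e2 e1 ∨ ∃ e', TopT e1 e' ∧ SR e2 e' := by
  rintro e e1 e2 hsr ⟨C, t⟩
  exact forkCloses_of_sr_fill_top_and C t hsr
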